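/- arXiv:2104.12989 — 2 statements merged into one kernel-verified Lean document; each statement's English description precedes it below -/
import Mathlib

section
/- An infinite sequence ⟨ā_i : i ∈ I⟩ of n-tuples is both indiscernible over M and an M-f.s. sequence if and only if there is an ultrafilter U on M^n such that tp(ā_i / M A_{<i}) = Av(U, M A_{<i}) for every i ∈ I. -/
/-!
`⇐`: the type of `ā_{i_k}` over `M ā_{i_0} … ā_{i_{k-1}}` is the `U`-average, so by induction on
`k` the type over `M` of an increasing `k`-tuple from the sequence is determined by `U` alone;
average types are finitely satisfied in `M`.

`⇒`: by indiscernibility every formula of `tp(ā_i / M A_{<i})` also holds of `ā_{i'}` for `i' ≥ i`,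
so the sets of realizations in `M^n` of all these formulas form a downward directed family, of
nonempty sets by finite satisfiability. An ultrafilter containing this family works, since the
types `tp(ā_i / M A_{<i})` are complete.
-/

open FirstOrder FirstOrder.Language Cardinal Set

universe u v w

namespace MonadicNIP

variable {L : FirstOrder.Language.{u, u}} {C : Type u} [L.Structure C]

/-- The complete type of the tuple `a` over the parameter set `B`:
all formulas with parameters from `B` and variables `α` satisfied by `a`. -/
def tpSet {α : Type v} (B : Set C) (a : α → C) : Set (L.Formula (B ⊕ α)) :=
  {φ | φ.Realize (Sum.elim (Subtype.val : B → C) a)}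

/-- A set of formulas over `B` (a "type") is finitely satisfied in `M` if each of
its formulas is realized by a tuple from `M`. -/
def FinSat (M : Set C) {α : Type v} {B : Set C} (p : Set (L.Formula (B ⊕ α))) : Prop :=
  ∀ φ ∈ p, ∃ m : α → C, (∀ i, m i ∈ M) ∧
    Formula.Realize φ (Sum.elim (Subtype.val : B → C) m)

/-- `p` is a complete type over `B` (in the monster `C`): finitely satisfiable
in `C` and deciding every formula. -/
def IsCompleteType {α : Type v} (B : Set C) (p : Set (L.Formula (B ⊕ α))) : Prop :=
  (∀ s : Finset (L.Formula (B ⊕ α)), ↑s ⊆ p →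
      ∃ a : α → C, ∀ φ ∈ s, Formula.Realize φ (Sum.elim (Subtype.val : B → C) a)) ∧
    ∀ φ : L.Formula (B ⊕ α), φ ∈ p ∨ φ.not ∈ p

/-- `tp(A/B)` is finitely satisfied in `M` (formulated without an enumeration of `A`). -/
def SetFinSat (L : FirstOrder.Language.{u, u}) {C : Type u} [L.Structure C] (M B A : Set C) : Prop :=
  ∀ (n : ℕ) (φ : L.Formula (B ⊕ Fin n)) (a : Fin n → C), (∀ i, a i ∈ A) →
    φ.Realize (Sum.elim (Subtype.val : B → C) a) →
    ∃ m : Fin n → C, (∀ i, m i ∈ M) ∧ φ.Realize (Sum.elim (Subtype.val : B → C) m)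

/-- `⟨A i : i ∈ I⟩` is an `M`-f.s. sequence over `B`. -/
def IsFSSeq (L : FirstOrder.Language.{u, u}) {C : Type u} [L.Structure C] (M B : Set C) {I : Type v} [LinearOrder I] (A : I → Set C) : Prop :=
  ∀ i : I, SetFinSat L M (B ∪ ⋃ j < i, A j) (A i)

/-- The average type of an ultrafilter `U` on `M^n` over the parameter set `B`. -/
def Av {n : ℕ} {M : Set C} (U : Ultrafilter (Fin n → M)) (B : Set C) :
    Set (L.Formula (B ⊕ Fin n)) :=
  {φ | {m : Fin n → M |
      Formula.Realize φ (Sum.elim (Subtype.val : B → C) (fun i => (m i : C)))} ∈ U}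

/-- `C0` is full (for non-splitting over `M`): every complete type over `M`
in finitely many variables (realized in the monster) is realized in `C0`. -/
def IsFull (L : FirstOrder.Language.{u, u}) {C : Type u} [L.Structure C] (M C0 : Set C) : Prop :=
  ∀ (n : ℕ) (a : Fin n → C), ∃ c : Fin n → C, (∀ i, c i ∈ C0) ∧
    tpSet (L := L) M a = tpSet (L := L) M c

/-- The sequence of tuples `a` is indiscernible over `B`. -/
def IndiscernibleOver (L : FirstOrder.Language.{u, u}) {C : Type u} [L.Structure C] {I : Type v} [LinearOrder I] {α : Type w} (B : Set C)
    (a : I → α → C) : Prop :=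
  ∀ (n : ℕ) (i j : Fin n → I), StrictMono i → StrictMono j →
    tpSet (L := L) B (fun p : Fin n × α => a (i p.1) p.2) =
      tpSet (L := L) B (fun p : Fin n × α => a (j p.1) p.2)

/-- The type `p` over `B` does not split over `M0`: parameter tuples from `B`
with the same type over `M0` are interchangeable in `p`. -/
def NotSplitOver (M0 : Set C) {B : Set C} {α : Type v}
    (p : Set (L.Formula (B ⊕ α))) : Prop :=
  ∀ (k : ℕ) (b b' : Fin k → B) (φ : L.Formula (Fin k ⊕ α)),
    tpSet (L := L) M0 (fun i => (b i : C)) = tpSet (L := L) M0 (fun i => (b' i : C)) →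
    (φ.relabel (Sum.elim (fun i => Sum.inl (b i)) Sum.inr) ∈ p ↔
      φ.relabel (Sum.elim (fun i => Sum.inl (b' i)) Sum.inr) ∈ p)

open Filter

theorem Fin.strictMono_snoc {I : Type v} [Preorder I] {k : ℕ} {f : Fin k → I} (hf : StrictMono f)
    {x : I} (hx : ∀ t, f t < x) : StrictMono (Fin.snoc f x : Fin (k + 1) → I) := by
  intro p q hpq
  induction q using Fin.lastCases with
  | last =>
    induction p using Fin.lastCases with
    | last => exact absurd hpq (lt_irrefl _)
    | cast p => simpa using hx p
  | cast q =>
    induction p using Fin.lastCases with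
    | last => exact absurd hpq (Fin.castSucc_lt_last q).asymm
    | cast p => simpa using hf (Fin.castSucc_lt_castSucc_iff.mp hpq)

theorem exists_ultrafilter_forall_mem_of_directed {X ι : Type*} [Nonempty ι] {s : ι → Set X}
    (hd : Directed (· ⊇ ·) s) (hne : ∀ i, (s i).Nonempty) : ∃ U : Ultrafilter X, ∀ i, s i ∈ U := by
  have : (⨅ i, 𝓟 (s i)).NeBot :=
    iInf_neBot_of_directed' (hd.mono_comp (g := 𝓟) _ fun _ _ => principal_mono.mpr)
      fun i => principal_neBot_iff.mpr (hne i)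
  exact ⟨.of _, fun i => Ultrafilter.of_le _ (mem_iInf_of_mem i (mem_principal_self _))⟩

theorem realize_relabel_inclusion {α : Type*} {B B' : Set C} (h : B ⊆ B') (φ : L.Formula (B ⊕ α))
    (v : α → C) :
    (φ.relabel (Sum.map (Set.inclusion h) id)).Realize (Sum.elim (Subtype.val : B' → C) v) ↔
      φ.Realize (Sum.elim (Subtype.val : B → C) v) := by
  rw [Formula.realize_relabel]
  congr!
  ext (b | x) <;> rfl

section Indiscernible

variable {I : Type v} [LinearOrder I] {α : Type w} {B : Set C} {a : I → α → C}

theorem IndiscernibleOver.realize_snoc_iff (hind : IndiscernibleOver L B a) {k : ℕ}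
    {j : Fin k → I} (hj : StrictMono j) {i i' : I} (hi : ∀ t, j t < i) (hi' : ∀ t, j t < i')
    (ψ : L.Formula (B ⊕ (Fin (k + 1) × α))) :
    ψ.Realize (Sum.elim (Subtype.val : B → C)
        fun p => a ((Fin.snoc j i : Fin (k + 1) → I) p.1) p.2) ↔
      ψ.Realize (Sum.elim (Subtype.val : B → C)
        fun p => a ((Fin.snoc j i' : Fin (k + 1) → I) p.1) p.2) :=
  Set.ext_iff.mp (hind (k + 1) _ _ (Fin.strictMono_snoc hj hi) (Fin.strictMono_snoc hj hi')) ψ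

theorem IndiscernibleOver.realize_iff_of_forall_lt (hind : IndiscernibleOver L B a) {κ : Type*}
    (g : κ → I) (q : κ → α) {i i' : I} (hi : ∀ t, g t < i) (hi' : ∀ t, g t < i')
    (ψ : L.Formula (B ⊕ (κ ⊕ α))) :
    ψ.Realize (Sum.elim (Subtype.val : B → C) (Sum.elim (fun t => a (g t) (q t)) (a i))) ↔
      ψ.Realize (Sum.elim (Subtype.val : B → C) (Sum.elim (fun t => a (g t) (q t)) (a i'))) := by
  classical
  -- only the finitely many indices `g t` occurring in `ψ` matter; list them increasingly
  set J : Finset I := ψ.freeVarFinset.toRight.toLeft.image g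
  have hJ : ∀ t, Sum.inr (Sum.inl t) ∈ ψ.freeVarFinset → g t ∈ J := fun t ht =>
    Finset.mem_image_of_mem g (by simpa using ht)
  have hJlt : ∀ {x}, (∀ t, g t < x) → ∀ j ∈ J, j < x := by
    intro x hx j hj
    obtain ⟨t, -, rfl⟩ := Finset.mem_image.mp hj
    exact hx t
  let e := J.orderIsoOfFin rfl
  let f : ψ.freeVarFinset → B ⊕ (Fin (J.card + 1) × α)
    | ⟨.inl b, _⟩ => .inl b
    | ⟨.inr (.inl t), ht⟩ => .inr ((e.symm ⟨g t, hJ t ht⟩).castSucc, q t)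
    | ⟨.inr (.inr r), _⟩ => .inr (Fin.last _, r)
  have hreindex : ∀ x, Formula.Realize (ψ.restrictFreeVar f) (Sum.elim (Subtype.val : B → C)
      fun p => a ((Fin.snoc (fun s => (e s : I)) x : Fin (J.card + 1) → I) p.1) p.2) ↔
      ψ.Realize (Sum.elim (Subtype.val : B → C) (Sum.elim (fun t => a (g t) (q t)) (a x))) :=
    fun x => BoundedFormula.realize_restrictFreeVar _ (by rintro ⟨b | t | r, h⟩ <;> simp [f])
  rw [← hreindex, ← hreindex]
  exact hind.realize_snoc_iff (fun s t hst => e.strictMono hst)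
    (fun s => hJlt hi _ (e s).2) (fun s => hJlt hi' _ (e s).2) _

end Indiscernible

section ParamsBelow

variable {I : Type v} [LinearOrder I] {α : Type w} {M : Set C} {a : I → α → C}

/-- The parameter set `M A_{<i}`. -/
abbrev paramsBelow (M : Set C) (a : I → α → C) (i : I) : Set C :=
  M ∪ ⋃ j < i, Set.range (a j)

theorem paramsBelow_mono : Monotone (paramsBelow M a) := fun _ _ hii =>
  Set.union_subset_union_right _ <|
    Set.biUnion_mono (fun _ hj => lt_of_lt_of_le hj hii) fun _ _ => le_rfl

theorem IndiscernibleOver.tpSet_subset_tpSet (hind : IndiscernibleOver L M a) {i i' : I}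
    (hii : i ≤ i') :
    tpSet (L := L) (paramsBelow M a i) (a i) ⊆ tpSet (L := L) (paramsBelow M a i) (a i') := by
  classical
  intro φ hφ
  have hnamed : ∀ b : {b : paramsBelow M a i // (b : C) ∉ M},
      ∃ p : I × α, p.1 < i ∧ a p.1 p.2 = b := by
    rintro ⟨⟨b, hbM | hb⟩, hnot⟩
    · exact absurd hbM hnot
    · obtain ⟨j, hj, q, rfl⟩ : ∃ j < i, ∃ q, a j q = b := by simpa using hb
      exact ⟨(j, q), hj, rfl⟩
  choose p hp_lt hp_eq using hnamed
  let G : paramsBelow M a i ⊕ α → M ⊕ ({b : paramsBelow M a i // (b : C) ∉ M} ⊕ α) :=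
    Sum.elim (fun b => if h : (b : C) ∈ M then .inl ⟨b, h⟩ else .inr (.inl ⟨b, h⟩))
      (Sum.inr ∘ Sum.inr)
  have hG : ∀ x, (φ.relabel G).Realize (Sum.elim (Subtype.val : M → C)
      (Sum.elim (fun t => a (p t).1 (p t).2) (a x))) ↔
      φ.Realize (Sum.elim (Subtype.val : paramsBelow M a i → C) (a x)) := by
    intro x
    rw [Formula.realize_relabel]
    congr!
    ext (b | r)
    · by_cases h : (b : C) ∈ M <;> simp [G, h, hp_eq]
    · rfl
  exact (hG i').mp <| (hind.realize_iff_of_forall_lt _ _ hp_lt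
    (fun t => (hp_lt t).trans_le hii) _).mp ((hG i).mpr hφ)

end ParamsBelow

section Average

variable {n : ℕ} {M : Set C}

theorem finSat_Av (U : Ultrafilter (Fin n → M)) (B : Set C) : FinSat M (Av (L := L) U B) := by
  intro φ hφ
  obtain ⟨m, hm⟩ := U.nonempty_of_mem hφ
  exact ⟨fun q => m q, fun q => (m q).2, hm⟩

theorem tpSet_eq_Av_of_subset {U : Ultrafilter (Fin n → M)} {B : Set C} {c : Fin n → C}
    (h : tpSet (L := L) B c ⊆ Av U B) : tpSet (L := L) B c = Av U B := by
  refine h.antisymm fun φ hφ => ?_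
  by_contra hnot
  exact Ultrafilter.compl_mem_iff_notMem.mp (h (Formula.realize_not.mpr hnot)) hφ

end Average

def substLastBlock {β α : Type*} {k : ℕ} (φ : L.Formula (β ⊕ (Fin (k + 1) × α))) (m : α → β) :
    L.Formula (β ⊕ (Fin k × α)) :=
  φ.relabel (Sum.elim Sum.inl fun p => Fin.lastCases (.inl (m p.2)) (fun t => .inr (t, p.2)) p.1)

section Sequence

variable {I : Type v} [LinearOrder I] {n : ℕ} {M : Set C} {a : I → Fin n → C}

theorem exists_ultrafilter_tpSet_eq_Av [Nonempty I] (hind : IndiscernibleOver L M a)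
    (hfs : ∀ i, FinSat M (tpSet (L := L) (paramsBelow M a i) (a i))) :
    ∃ U : Ultrafilter (Fin n → M),
      ∀ i, tpSet (L := L) (paramsBelow M a i) (a i) = Av U (paramsBelow M a i) := by
  let ι := Σ i : I, tpSet (L := L) (paramsBelow M a i) (a i)
  let s : ι → Set (Fin n → M) := fun x =>
    {m | x.2.1.Realize (Sum.elim Subtype.val fun q => (m q : C))}
  have hlift : ∀ (x : ι) {i'} (h : x.1 ≤ i'),
      x.2.1.relabel (Sum.map (Set.inclusion (paramsBelow_mono h)) id) ∈
        tpSet (L := L) (paramsBelow M a i') (a i') := fun x _ h =>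
    (realize_relabel_inclusion _ _ _).mpr (hind.tpSet_subset_tpSet h x.2.2)
  have hdir : Directed (· ⊇ ·) s := by
    intro x y
    refine ⟨⟨max x.1 y.1, _ ⊓ _, Formula.realize_inf.mpr
      ⟨hlift x (le_max_left _ _), hlift y (le_max_right _ _)⟩⟩,
      fun m hm => ?_, fun m hm => ?_⟩ <;>
    simp only [s, Set.mem_ofPred_eq, Formula.realize_inf, realize_relabel_inclusion] at hm
    exacts [hm.1, hm.2]
  have hne : ∀ x, (s x).Nonempty := fun x => by
    obtain ⟨m, hm, hreal⟩ := hfs x.1 x.2.1 x.2.2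
    exact ⟨fun q => ⟨m q, hm q⟩, hreal⟩
  have : Nonempty ι := ⟨⟨Classical.arbitrary I, ⊤, Formula.realize_top.mpr trivial⟩⟩
  obtain ⟨U, hU⟩ := exists_ultrafilter_forall_mem_of_directed hdir hne
  exact ⟨U, fun i => tpSet_eq_Av_of_subset fun φ hφ => hU ⟨i, φ, hφ⟩⟩

theorem mem_tpSet_iff_substLastBlock_mem {U : Ultrafilter (Fin n → M)}
    (hU : ∀ i, tpSet (L := L) (paramsBelow M a i) (a i) = Av U (paramsBelow M a i))
    {k : ℕ} {i : Fin (k + 1) → I} (hi : StrictMono i)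
    (φ : L.Formula (M ⊕ (Fin (k + 1) × Fin n))) :
    φ ∈ tpSet (L := L) M (fun p => a (i p.1) p.2) ↔
      {m | substLastBlock φ m ∈ tpSet (L := L) M (fun p => a (i p.1.castSucc) p.2)} ∈ U := by
  have hmem : ∀ t q, a (i (Fin.castSucc t)) q ∈ paramsBelow M a (i (Fin.last k)) := fun t q =>
    Or.inr (Set.mem_biUnion (hi (Fin.castSucc_lt_last t)) ⟨q, rfl⟩)
  -- `φ` read as a formula about the last tuple, with the earlier tuples as parameters
  let ψ : L.Formula (paramsBelow M a (i (Fin.last k)) ⊕ Fin n) := φ.relabel <|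
    Sum.elim (fun x : M => .inl ⟨x, Or.inl x.2⟩)
      fun p : Fin (k + 1) × Fin n => Fin.lastCases (.inr p.2) (fun t => .inl ⟨_, hmem t p.2⟩) p.1
  have hlast : ψ ∈ tpSet (L := L) _ (a (i (Fin.last k))) ↔
      φ ∈ tpSet (L := L) M (fun p => a (i p.1) p.2) := by
    simp only [tpSet, Set.mem_ofPred_eq, ψ, Formula.realize_relabel]
    congr!
    ext (x | ⟨t, q⟩)
    · rfl
    · induction t using Fin.lastCases <;> simp
  have hav : ∀ m : Fin n → M, ψ.Realize (Sum.elim Subtype.val fun q => (m q : C)) ↔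
      substLastBlock φ m ∈ tpSet (L := L) M (fun p => a (i p.1.castSucc) p.2) := by
    intro m
    simp only [tpSet, Set.mem_ofPred_eq, ψ, substLastBlock, Formula.realize_relabel]
    congr!
    ext (x | ⟨t, q⟩)
    · rfl
    · induction t using Fin.lastCases <;> simp
  rw [← hlast, hU]
  exact Iff.of_eq (congrArg (· ∈ U) (Set.ext hav))

theorem indiscernibleOver_of_tpSet_eq_Av {U : Ultrafilter (Fin n → M)}
    (hU : ∀ i, tpSet (L := L) (paramsBelow M a i) (a i) = Av U (paramsBelow M a i)) :
    IndiscernibleOver L M a := by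
  intro k
  induction k with
  | zero =>
    intro i j _ _
    rw [Subsingleton.elim (fun p : Fin 0 × Fin n => a (i p.1) p.2) fun p => a (j p.1) p.2]
  | succ k ih =>
    intro i j hi hj
    have hinit := ih _ _ (hi.comp Fin.strictMono_castSucc) (hj.comp Fin.strictMono_castSucc)
    ext φ
    simp only [Function.comp_apply] at hinit
    rw [mem_tpSet_iff_substLastBlock_mem hU hi, mem_tpSet_iff_substLastBlock_mem hU hj, hinit]

end Sequence

/-- An infinite sequence of `n`-tuples is both indiscernible over `M` and
an `M`-f.s. sequence iff there is an ultrafilter `U` on `M^n` with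
`tp(ā_i / M A_{<i}) = Av(U, M A_{<i})` for every `i`. -/
theorem statement11 (M : L.ElementarySubstructure C) {I : Type v} [LinearOrder I]
    [Infinite I] (n : ℕ) (a : I → Fin n → C) :
    (IndiscernibleOver L (M : Set C) a ∧
        ∀ i : I, FinSat (M : Set C)
          (tpSet (L := L) ((M : Set C) ∪ ⋃ j < i, Set.range (a j)) (a i))) ↔
    ∃ U : Ultrafilter (Fin n → ((M : Set C) : Set C)),
      ∀ i : I, tpSet (L := L) ((M : Set C) ∪ ⋃ j < i, Set.range (a j)) (a i) =
          Av (L := L) U ((M : Set C) ∪ ⋃ j < i, Set.range (a j)) := by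
  constructor
  · rintro ⟨hind, hfs⟩
    exact exists_ultrafilter_tpSet_eq_Av hind hfs
  · rintro ⟨U, hU⟩
    exact ⟨indiscernibleOver_of_tpSet_eq_Av hU, fun i => hU i ▸ finSat_Av U _⟩

end MonadicNIP
end

section
/- Suppose C ⊇ M is full and ⟨A_i : i ∈ I⟩ is an M-f.s. sequence over C. Then ⟨A_i : i ∈ I⟩ is indiscernible over C if and only if tp(A_i/C) = tp(A_j/C) for all i, j ∈ I. -/
open FirstOrder FirstOrder.Language Cardinal Set

universe u v w

namespace MonadicNIP

variable {L : FirstOrder.Language.{u, u}} {C : Type u} [L.Structure C]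

/-!
Finite satisfiability of `tp(y/B)` in `M` implies that `tp(y/B)` does not split over `M`:
if `θ(b, y) ∧ ¬θ(b', y)` held, it would be realized by some `m` from `M`, contradicting
`tp(b/M) = tp(b'/M)`. For indiscernibility, compare increasing tuples `ī ⌢ i` and `j̄ ⌢ j`
by induction on their length. A formula `θ(c, a_ī, a_i)` only involves a finite part `b` of
the prefix; fullness gives a copy `d` of `b` in `C0` with the same type over `M`, and
`θ(b, a_i) ↔ θ(d, a_i) ↔ θ(d, a_j) ↔ θ(b', a_j)`: non-splitting, `tp(a_i/C0) = tp(a_j/C0)`, and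
non-splitting again, using `tp(b/M) = tp(b'/M)` from the induction hypothesis.
-/

theorem realize_comp_iff_of_tpSet_eq {B : Set C} {β : Type v} {u u' : β → C}
    (h : tpSet (L := L) B u = tpSet (L := L) B u') {γ : Type w} (φ : L.Formula γ)
    (g : γ → B ⊕ β) :
    φ.Realize (Sum.elim (Subtype.val : B → C) u ∘ g) ↔
      φ.Realize (Sum.elim (Subtype.val : B → C) u' ∘ g) := by
  rw [← Formula.realize_relabel, ← Formula.realize_relabel]
  exact Set.ext_iff.mp h (φ.relabel g)

theorem tpSet_comp_eq_of_tpSet_eq {B : Set C} {β : Type v} {u u' : β → C}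
    (h : tpSet (L := L) B u = tpSet (L := L) B u') {κ : Type w} (f : κ → β) :
    tpSet (L := L) B (u ∘ f) = tpSet (L := L) B (u' ∘ f) := by
  ext φ
  have h' := realize_comp_iff_of_tpSet_eq h φ (Sum.map id f)
  rwa [Sum.elim_comp_map, Sum.elim_comp_map] at h'

theorem tpSet_sumElim_eq_of_subset {M B : Set C} (hMB : M ⊆ B) {β : Type v} {u u' : β → C}
    (h : tpSet (L := L) B u = tpSet (L := L) B u') :
    tpSet (L := L) M (Sum.elim (Subtype.val : B → C) u) =
      tpSet (L := L) M (Sum.elim (Subtype.val : B → C) u') := by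
  ext φ
  have h' := realize_comp_iff_of_tpSet_eq h φ (Sum.elim (Sum.inl ∘ Set.inclusion hMB) id)
  rwa [Sum.comp_elim, Sum.comp_elim] at h'

theorem realize_iff_of_finSat {M B : Set C} {α : Type v} {y : α → C}
    (hy : FinSat M (tpSet (L := L) B y)) {κ : Type w} {b b' : κ → C} (hb : ∀ k, b k ∈ B)
    (hb' : ∀ k, b' k ∈ B) (hbb' : tpSet (L := L) M b = tpSet (L := L) M b')
    (θ : L.Formula (κ ⊕ α)) :
    θ.Realize (Sum.elim b y) ↔ θ.Realize (Sum.elim b' y) := by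
  suffices H : ∀ {b b' : κ → C}, (∀ k, b k ∈ B) → (∀ k, b' k ∈ B) →
      tpSet (L := L) M b = tpSet (L := L) M b' →
      θ.Realize (Sum.elim b y) → θ.Realize (Sum.elim b' y) from
    ⟨H hb hb' hbb', H hb' hb hbb'.symm⟩
  intro b b' hb hb' hbb' hθ
  by_contra hθ'
  let ψ : L.Formula (B ⊕ α) := θ.relabel (Sum.map (fun k => ⟨b k, hb k⟩) id) ⊓
    (θ.relabel (Sum.map (fun k => ⟨b' k, hb' k⟩) id)).not
  have hψ : ψ ∈ tpSet B y := by
    simp only [ψ, tpSet, Set.mem_ofPred_eq, Formula.realize_inf, Formula.realize_not,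
      Formula.realize_relabel, Sum.elim_comp_map]
    exact ⟨hθ, hθ'⟩
  obtain ⟨m, hm, hψm⟩ := hy ψ hψ
  simp only [ψ, Formula.realize_inf, Formula.realize_not, Formula.realize_relabel,
    Sum.elim_comp_map] at hψm
  have hmM := realize_comp_iff_of_tpSet_eq hbb' θ (Sum.elim Sum.inr fun x => Sum.inl ⟨m x, hm x⟩)
  rw [Sum.comp_elim, Sum.comp_elim] at hmM
  exact hψm.2 (hmM.1 hψm.1)

theorem IsFull.exists_tpSet_eq {M C0 : Set C} (hfull : IsFull L M C0) {κ : Type w} [Finite κ]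
    (b : κ → C) : ∃ d : κ → C, (∀ k, d k ∈ C0) ∧ tpSet (L := L) M b = tpSet (L := L) M d := by
  obtain ⟨n, ⟨e⟩⟩ := Finite.exists_equiv_fin κ
  obtain ⟨c, hc, hbc⟩ := hfull n (b ∘ e.symm)
  refine ⟨c ∘ e, fun k => hc (e k), ?_⟩
  have h := tpSet_comp_eq_of_tpSet_eq hbc e
  rwa [Function.comp_assoc, e.symm_comp_self, Function.comp_id] at h

theorem exists_finset_params_realize_iff {κ : Type w} {α : Type v} (θ : L.Formula (κ ⊕ α)) :
    ∃ (s : Finset κ) (θ' : L.Formula (s ⊕ α)), ∀ (b : κ → C) (y : α → C),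
      θ.Realize (Sum.elim b y) ↔ θ'.Realize (Sum.elim (b ∘ (↑)) y) := by
  classical
  refine ⟨θ.freeVarFinset.toLeft, θ.restrictFreeVar fun
    | ⟨.inl k, hk⟩ => .inl ⟨k, Finset.mem_toLeft.2 hk⟩
    | ⟨.inr x, _⟩ => .inr x, fun b y => ?_⟩
  exact (BoundedFormula.realize_restrictFreeVar _ (by rintro ⟨k | x, _⟩ <;> rfl)).symm

theorem realize_iff_of_isFull {M C0 B B' : Set C} (hfull : IsFull L M C0) (hB : C0 ⊆ B)
    (hB' : C0 ⊆ B') {α : Type v} {y y' : α → C} (hy : FinSat M (tpSet (L := L) B y))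
    (hy' : FinSat M (tpSet (L := L) B' y')) (hyy' : tpSet (L := L) C0 y = tpSet (L := L) C0 y')
    {κ : Type w} {b b' : κ → C} (hb : ∀ k, b k ∈ B) (hb' : ∀ k, b' k ∈ B')
    (hbb' : tpSet (L := L) M b = tpSet (L := L) M b') (θ : L.Formula (κ ⊕ α)) :
    θ.Realize (Sum.elim b y) ↔ θ.Realize (Sum.elim b' y') := by
  obtain ⟨s, θ', hθ'⟩ := exists_finset_params_realize_iff (C := C) θ
  obtain ⟨d, hd, hbd⟩ := hfull.exists_tpSet_eq (b ∘ (↑) : s → C)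
  have hb'd : tpSet (L := L) M (b' ∘ (↑) : s → C) = tpSet M d :=
    (tpSet_comp_eq_of_tpSet_eq hbb' _).symm.trans hbd
  have hdy : θ'.Realize (Sum.elim d y) ↔ θ'.Realize (Sum.elim d y') := by
    have h := realize_comp_iff_of_tpSet_eq hyy' θ' (Sum.map (fun k => ⟨d k, hd k⟩) id)
    rwa [Sum.elim_comp_map, Sum.elim_comp_map] at h
  rw [hθ', hθ']
  calc θ'.Realize (Sum.elim (b ∘ (↑)) y)
      ↔ θ'.Realize (Sum.elim d y) :=
        realize_iff_of_finSat hy (fun k : s => hb k) (fun k => hB (hd k)) hbd θ'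
    _ ↔ θ'.Realize (Sum.elim d y') := hdy
    _ ↔ θ'.Realize (Sum.elim (b' ∘ (↑)) y') :=
        (realize_iff_of_finSat hy' (fun k : s => hb' k) (fun k => hB' (hd k)) hb'd θ').symm

def splitLast {β : Type v} {α : Type w} {n : ℕ} :
    β ⊕ (Fin (n + 1) × α) → (β ⊕ (Fin n × α)) ⊕ α :=
  Sum.elim (Sum.inl ∘ Sum.inl) fun p =>
    Fin.lastCases (Sum.inr p.2) (fun k => Sum.inl (Sum.inr (k, p.2))) p.1

theorem sumElim_comp_splitLast {γ : Type*} {β : Type v} {α : Type w} {n : ℕ} (v : β → γ)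
    (t : Fin (n + 1) × α → γ) :
    Sum.elim (Sum.elim v fun q : Fin n × α => t (q.1.castSucc, q.2)) (fun x => t (Fin.last n, x))
      ∘ splitLast = Sum.elim v t := by
  funext p
  rcases p with c | ⟨k, x⟩
  · rfl
  · induction k using Fin.lastCases <;> simp [splitLast]

theorem indiscernibleOver_of_tpSet_eq {M C0 : Set C} (hMC : M ⊆ C0) (hfull : IsFull L M C0)
    {I : Type v} [LinearOrder I] {α : Type w} (a : I → α → C)
    (hfs : ∀ i, FinSat M (tpSet (L := L) (C0 ∪ ⋃ j < i, Set.range (a j)) (a i)))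
    (hsame : ∀ i j, tpSet (L := L) C0 (a i) = tpSet (L := L) C0 (a j)) :
    IndiscernibleOver L C0 a := by
  intro n
  induction n with
  | zero =>
    intro i j _ _
    congr
    funext p
    exact p.1.elim0
  | succ n ih =>
    have hprefix : ∀ i : Fin (n + 1) → I, StrictMono i → ∀ k,
        Sum.elim (Subtype.val : C0 → C) (fun q : Fin n × α => a (i q.1.castSucc) q.2) k ∈
          C0 ∪ ⋃ j < i (Fin.last n), Set.range (a j) := by
      rintro i hi (c | ⟨k, x⟩)
      · exact Or.inl c.2
      · exact Or.inr (Set.mem_iUnion₂.2 ⟨_, hi (Fin.castSucc_lt_last k), x, rfl⟩)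
    intro i j hi hj
    ext φ
    have key := realize_iff_of_isFull hfull Set.subset_union_left Set.subset_union_left
      (hfs (i (Fin.last n))) (hfs (j (Fin.last n))) (hsame _ _) (hprefix i hi) (hprefix j hj)
      (tpSet_sumElim_eq_of_subset hMC (ih _ _ (hi.comp Fin.strictMono_castSucc)
        (hj.comp Fin.strictMono_castSucc))) (φ.relabel splitLast)
    rw [Formula.realize_relabel, Formula.realize_relabel] at key
    show φ.Realize _ ↔ φ.Realize _
    convert key using 2 <;> exact (sumElim_comp_splitLast _ _).symm

theorem IndiscernibleOver.tpSet_eq {B : Set C} {I : Type v} [LinearOrder I] {α : Type w}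
    {a : I → α → C} (ha : IndiscernibleOver L B a) (i j : I) :
    tpSet (L := L) B (a i) = tpSet (L := L) B (a j) :=
  tpSet_comp_eq_of_tpSet_eq
    (ha 1 (fun _ => i) (fun _ => j) (Subsingleton.strictMono _) (Subsingleton.strictMono _))
    fun x : α => ((0 : Fin 1), x)

/-- If `C0 ⊇ M` is full and `⟨A_i : i ∈ I⟩` is an `M`-f.s. sequence over
`C0` (with fixed enumerations), then the sequence is indiscernible over `C0` iff
`tp(A_i/C0) = tp(A_j/C0)` for all `i, j`. -/
theorem statement13 (M : L.ElementarySubstructure C) (C0 : Set C)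
    (hMC : (M : Set C) ⊆ C0) (hfull : IsFull L (M : Set C) C0)
    {I : Type v} [LinearOrder I] {α : Type w} (a : I → α → C)
    (hfs : ∀ i : I, FinSat (M : Set C)
        (tpSet (L := L) (C0 ∪ ⋃ j < i, Set.range (a j)) (a i))) :
    IndiscernibleOver L C0 a ↔
      ∀ i j : I, tpSet (L := L) C0 (a i) = tpSet (L := L) C0 (a j) :=
  ⟨IndiscernibleOver.tpSet_eq, indiscernibleOver_of_tpSet_eq hMC hfull a hfs⟩

end MonadicNIP
end
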